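/- Let {(X_n,Y_n)} be a Markov chain of memory length k ≥ 1 with all-positive transition matrix on the product of finite alphabets A × B. Let Θ parametrize all all-positive k-th order transition matrices Q_θ(a_0,b_0 | a_{−k}^{−1}, b_{−k}^{−1}) on A × B, let Φ parametrize the null model of transition matrices that factorize as Q(a_0,b_0 | a_{−k}^{−1}, b_{−k}^{−1}) = Q^x(a_0 | a_{−k}^{−1}, b_{−k}^{−1}) · Q^y(b_0 | b_{−k}^{−1}) with all-positive factors, embedded in Θ via h, and let L_n((X,Y)_{−k+1}^n; θ) = log ∏_{i=1}^n Q_θ(X_i,Y_i | X_{i−k}^{i−1}, Y_{i−k}^{i−1}) be the conditional log-likelihood. Then the likelihood-ratio statistic Δ_n = 2[ max_{θ∈Θ} L_n(·;θ) − max_{φ∈Φ} L_n(·;h(φ)) ] satisfies Δ_n = 2n Î_n^{(k)}(X → Y). -/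

import Mathlib

open MeasureTheory ProbabilityTheory Filter Finset Topology
open scoped NNReal

noncomputable section

/-- Shannon entropy (natural logarithm) of a probability vector on a finite type. -/
def ent {T : Type*} [Fintype T] (p : T → ℝ) : ℝ := ∑ t, Real.negMulLog (p t)

/-- `Z` is a homogeneous Markov chain of memory length (at most) `k` with
transition matrix `Q` (and arbitrary initial distribution). -/
def IsMarkovK {Ω S : Type*} [MeasurableSpace Ω] (μ : Measure Ω) (Z : ℕ → Ω → S)
    (k : ℕ) (Q : (Fin k → S) → S → ℝ) : Prop :=
  ∀ (n : ℕ) (w : Fin (n + k) → S) (s : S),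
    (μ {ω | (∀ i : Fin (n + k), Z (i : ℕ) ω = w i) ∧ Z (n + k) ω = s}).toReal
      = Q (fun j => w (Fin.natAdd n j)) s
        * (μ {ω | ∀ i : Fin (n + k), Z (i : ℕ) ω = w i}).toReal

/-- `Z` is a (strictly) stationary process. -/
def IsStationaryProc {Ω S : Type*} [MeasurableSpace Ω] (μ : Measure Ω) (Z : ℕ → Ω → S) : Prop :=
  ∀ (n : ℕ) (w : Fin n → S),
    μ {ω | ∀ i : Fin n, Z (i : ℕ) ω = w i} = μ {ω | ∀ i : Fin n, Z ((i : ℕ) + 1) ω = w i}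

/-- The first-order transition matrix on `k`-blocks induced by an order-`k`
transition matrix `Q`. -/
def blockMat {S : Type*} [Fintype S] [DecidableEq S] (k : ℕ) (hk : 0 < k)
    (Q : (Fin k → S) → S → ℝ) : Matrix (Fin k → S) (Fin k → S) ℝ :=
  Matrix.of fun u v =>
    if ∀ i j : Fin k, (j : ℕ) = (i : ℕ) + 1 → v i = u j
    then Q u (v ⟨k - 1, Nat.sub_lt hk Nat.one_pos⟩) else 0

/-- Irreducibility and aperiodicity of an order-`k` chain, expressed as
primitivity of the induced chain on `k`-blocks. -/
def IrreducibleAperiodicK {S : Type*} [Fintype S] [DecidableEq S] (k : ℕ) (hk : 0 < k)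
    (Q : (Fin k → S) → S → ℝ) : Prop :=
  ∃ N : ℕ, 0 < N ∧ ∀ u v : Fin k → S, 0 < (blockMat k hk Q ^ N) u v

/-- Marginal of a block distribution on the full `Y`-block. -/
def yFull {A B : Type*} [Fintype A] (k : ℕ) (p : (Fin (k + 1) → A × B) → ℝ)
    (b : Fin (k + 1) → B) : ℝ :=
  ∑ a : Fin (k + 1) → A, p fun i => (a i, b i)

/-- Marginal of a block distribution on the first `k` `Y`-coordinates. -/
def yFront {A B : Type*} [Fintype A] [Fintype B] (k : ℕ) (p : (Fin (k + 1) → A × B) → ℝ)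
    (b : Fin k → B) : ℝ :=
  ∑ s : B, yFull k p (Fin.snoc b s : Fin (k + 1) → B)

/-- Marginal of a block distribution on the full `X`-block together with the
first `k` `Y`-coordinates. -/
def xyFront {A B : Type*} [Fintype B] (k : ℕ) (p : (Fin (k + 1) → A × B) → ℝ)
    (a : Fin (k + 1) → A) (b : Fin k → B) : ℝ :=
  ∑ s : B, p fun i => (a i, (Fin.snoc b s : Fin (k + 1) → B) i)

/-- The log-ratio appearing in the conditional mutual information
`I(Y₀; X₋ₖ⁰ ∣ Y₋ₖ⁻¹)` of a `(k+1)`-block distribution `p`. -/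
def logRatio {A B : Type*} [Fintype A] [Fintype B] (k : ℕ)
    (p : (Fin (k + 1) → A × B) → ℝ) (w : Fin (k + 1) → A × B) : ℝ :=
  Real.log ((p w * yFront k p fun j => (w j.castSucc).2) /
    (xyFront k p (fun i => (w i).1) (fun j => (w j.castSucc).2)
      * yFull k p fun i => (w i).2))

/-- The conditional mutual information `I(Y₀; X₋ₖ⁰ ∣ Y₋ₖ⁻¹)` of a distribution
`p` of a `(k+1)`-block of pairs. -/
def condMIk {A B : Type*} [Fintype A] [Fintype B] (k : ℕ)
    (p : (Fin (k + 1) → A × B) → ℝ) : ℝ :=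
  ∑ w : Fin (k + 1) → A × B, p w * logRatio k p w

/-- Empirical distribution of `l`-blocks of the sample `z 0, …, z (n+l-2)`. -/
def empBlock {S : Type*} [DecidableEq S] (z : ℕ → S) (l n : ℕ) (w : Fin l → S) : ℝ :=
  (∑ i ∈ Finset.range n, if ∀ j : Fin l, z (i + (j : ℕ)) = w j then (1 : ℝ) else 0) / n

/-- The plug-in estimator of the directed information rate, with memory `k`,
computed from the sample `z 0, …, z (n+k-1)`. -/
def pluginDI {A B : Type*} [Fintype A] [Fintype B] [DecidableEq A] [DecidableEq B]
    (z : ℕ → A × B) (k n : ℕ) : ℝ :=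
  condMIk k (empBlock z (k + 1) n)

/-- Distribution of a finite-valued observable. -/
def distOf {Ω T : Type*} [MeasurableSpace Ω] [Fintype T] (μ : Measure Ω) (f : Ω → T) : T → ℝ :=
  fun t => (μ (f ⁻¹' {t})).toReal

/-- Entropy of (the distribution of) a finite-valued observable. -/
def entOf {Ω T : Type*} [MeasurableSpace Ω] [Fintype T] (μ : Measure Ω) (f : Ω → T) : ℝ :=
  ent (distOf μ f)

/-- The directed information `I(X₁ⁿ → Y₁ⁿ) = H(Y₁ⁿ) − ∑ᵢ H(Yᵢ ∣ Y₁ⁱ⁻¹, X₁ⁱ)`,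
with the conditional entropies written as differences of joint entropies. -/
def DIsum {Ω A B : Type*} [MeasurableSpace Ω] [Fintype A] [Fintype B]
    (μ : Measure Ω) (Z : ℕ → Ω → A × B) (n : ℕ) : ℝ :=
  entOf μ (fun ω => fun i : Fin n => (Z (i : ℕ) ω).2)
    - ∑ i ∈ Finset.range n,
        (entOf μ (fun ω =>
            ((fun j : Fin (i + 1) => (Z (j : ℕ) ω).1),
              fun j : Fin (i + 1) => (Z (j : ℕ) ω).2))
          - entOf μ (fun ω =>
            ((fun j : Fin (i + 1) => (Z (j : ℕ) ω).1),
              fun j : Fin i => (Z (j : ℕ) ω).2)))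

/-- The distribution of an `l`-block of the process `Z`. -/
def blockDist {Ω S : Type*} [MeasurableSpace Ω] (μ : Measure Ω) (Z : ℕ → Ω → S) (l : ℕ) :
    (Fin l → S) → ℝ :=
  fun w => (μ {ω | ∀ i : Fin l, Z (i : ℕ) ω = w i}).toReal

/-- Convergence in distribution of real random variables. -/
def TendstoInDistribution {Ω : Type*} [MeasurableSpace Ω] (μ : Measure Ω)
    (W : ℕ → Ω → ℝ) (ν : Measure ℝ) : Prop :=
  ∀ f : BoundedContinuousFunction ℝ ℝ,
    Tendsto (fun n => ∫ ω, f (W n ω) ∂μ) atTop (𝓝 (∫ x, f x ∂ν))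

/-- Chi-squared distribution with `s` degrees of freedom, as the Gamma
distribution with shape `s/2` and rate `1/2`. -/
def chiSq (s : ℕ) : Measure ℝ := gammaMeasure ((s : ℝ) / 2) (1 / 2)

/-- Relative entropy (Kullback–Leibler divergence, natural logarithm) between
probability vectors on a finite type. -/
def KLdiv {T : Type*} [Fintype T] (p q : T → ℝ) : ℝ :=
  ∑ t, p t * Real.log (p t / q t)

/-! The conditional log-likelihood of a transition matrix `Q` regroups by context as
`∑ᵤ ∑ₜ N(u,t) log Q(t ∣ u)`, so by Gibbs' inequality it is maximized by the empirical transition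
frequencies `N(u,t) / N(u)`; as `Q` must be strictly positive this maximum is only a supremum,
approached by additive smoothing. The log-likelihood of the factorized model splits into an
`X`-part and a `Y`-part that are maximized independently, so `Δₙ / 2` is the sum over the sample
of `log (N(x₋ₖ⁰, y₋ₖ⁰) N(y₋ₖ⁻¹) / (N(x₋ₖ⁰, y₋ₖ⁻¹) N(y₋ₖ⁰)))`. These counts are `n` times the
empirical `(k+1)`-block distribution and its marginals, and regrouping the sum by blocks gives
`n Îₙ`. -/

open Function Real
open scoped Pointwise

section Occurrences

variable {V W T : Type*} [DecidableEq V]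

def numOcc (n : ℕ) (F : ℕ → V) (v : V) : ℝ := #{i ∈ range n | F i = v}

lemma numOcc_eq_sum (n : ℕ) (F : ℕ → V) (v : V) :
    numOcc n F v = ∑ i ∈ range n, if F i = v then 1 else 0 :=
  natCast_card_filter _ _

lemma numOcc_nonneg (n : ℕ) (F : ℕ → V) (v : V) : 0 ≤ numOcc n F v :=
  Nat.cast_nonneg _

lemma one_le_numOcc_self {n i : ℕ} (hi : i < n) (F : ℕ → V) : 1 ≤ numOcc n F (F i) := by
  rw [numOcc, Nat.one_le_cast, Nat.one_le_iff_ne_zero, ← pos_iff_ne_zero, card_pos]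
  exact ⟨i, by simpa using hi⟩

lemma sum_numOcc_mul [Fintype V] (n : ℕ) (F : ℕ → V) (h : V → ℝ) :
    ∑ v, numOcc n F v * h v = ∑ i ∈ range n, h (F i) := by
  rw [← sum_fiberwise (range n) F]
  refine sum_congr rfl fun v _ => ?_
  rw [sum_congr rfl fun i hi => congrArg h (mem_filter.1 hi).2, sum_const, nsmul_eq_mul, numOcc]

lemma numOcc_comp_of_injective [DecidableEq W] {e : V → W} (he : Injective e) (n : ℕ)
    (F : ℕ → V) (v : V) : numOcc n (fun i => e (F i)) (e v) = numOcc n F v := by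
  simp only [numOcc, he.eq_iff]

lemma sum_numOcc_of_injective [DecidableEq W] [Fintype T] {g : T → V} (hg : Injective g)
    {φ : V → W} {w : W} (hφ : ∀ v, φ v = w ↔ ∃ t, g t = v) (n : ℕ) (F : ℕ → V) :
    ∑ t, numOcc n F (g t) = numOcc n (fun i => φ (F i)) w := by
  classical
  simp only [numOcc_eq_sum]
  rw [sum_comm]
  refine sum_congr rfl fun i _ => ?_
  by_cases h : ∃ t, g t = F i
  · obtain ⟨t₀, ht₀⟩ := h
    rw [← ht₀]
    simp [hg.eq_iff, (hφ _).2 ⟨t₀, rfl⟩]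
  · push Not at h
    simp [(h _).symm, mt (hφ (F i)).1 (by simpa using h)]

lemma numOcc_eq_sum_numOcc_prod [Fintype T] [DecidableEq T] (n : ℕ) (f : ℕ → V) (g : ℕ → T)
    (v : V) : numOcc n f v = ∑ t, numOcc n (fun i => (f i, g i)) (v, t) := by
  refine (sum_numOcc_of_injective (Prod.mk_right_injective (β := T) v) (φ := Prod.fst) ?_ n
    (fun i => (f i, g i))).symm
  rintro ⟨u, t⟩
  exact ⟨fun h => ⟨t, by rw [← h]⟩, by rintro ⟨t, h⟩; exact congrArg Prod.fst h.symm⟩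

end Occurrences

lemma mul_log_le_mul_log_div_add {c q m : ℝ} (hc : 0 ≤ c) (hq : 0 < q) (hcm : c ≤ m) :
    c * log q ≤ c * log (c / m) + (q * m - c) := by
  rcases hc.eq_or_lt with rfl | hc
  · simpa using mul_nonneg hq.le hcm
  have hm : 0 < m := hc.trans_le hcm
  have hlog : c * log (q * m / c) ≤ c * (q * m / c - 1) :=
    mul_le_mul_of_nonneg_left (log_le_sub_one_of_pos (by positivity)) hc.le
  have hrhs : c * (q * m / c - 1) = q * m - c := by field_simp
  rw [log_div (by positivity) hc.ne', log_div hc.ne' hm.ne', log_mul hq.ne' hm.ne'] at *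
  linarith

lemma sum_mul_log_le_sum_mul_log_div_sum {S : Type*} [Fintype S] (c q : S → ℝ)
    (hc : ∀ t, 0 ≤ c t) (hq : ∀ t, 0 < q t) (hq1 : ∑ t, q t = 1) :
    ∑ t, c t * log (q t) ≤ ∑ t, c t * log (c t / ∑ s, c s) := by
  have key := sum_le_sum fun t (_ : t ∈ univ) =>
    mul_log_le_mul_log_div_add (hc t) (hq t) (single_le_sum (fun s _ => hc s) (mem_univ t))
  rwa [sum_add_distrib, sum_sub_distrib, ← sum_mul, hq1, one_mul, sub_self, add_zero] at key

section MaximumLikelihood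

variable {U S : Type*} [Fintype S]

def condLogLiks (n : ℕ) (f : ℕ → U) (g : ℕ → S) : Set ℝ :=
  {L | ∃ Q : U → S → ℝ, (∀ u t, 0 < Q u t) ∧ (∀ u, ∑ t, Q u t = 1) ∧
    L = ∑ i ∈ range n, log (Q (f i) (g i))}

def maxCondLogLik [DecidableEq U] [DecidableEq S] (n : ℕ) (f : ℕ → U) (g : ℕ → S) : ℝ :=
  ∑ i ∈ range n, log (numOcc n (fun i => (f i, g i)) (f i, g i) / numOcc n f (f i))

lemma condLogLiks_nonempty [Nonempty S] (n : ℕ) (f : ℕ → U) (g : ℕ → S) :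
    (condLogLiks n f g).Nonempty := by
  have hS : (0 : ℝ) < Fintype.card S := by exact_mod_cast Fintype.card_pos
  refine ⟨_, fun _ _ => (Fintype.card S : ℝ)⁻¹, fun _ _ => by positivity, fun _ => ?_, rfl⟩
  rw [sum_const, card_univ, nsmul_eq_mul, mul_inv_cancel₀ hS.ne']

variable [Fintype U] [DecidableEq U] [DecidableEq S]

lemma le_maxCondLogLik (n : ℕ) (f : ℕ → U) (g : ℕ → S) :
    ∀ L ∈ condLogLiks n f g, L ≤ maxCondLogLik n f g := by
  rintro _ ⟨Q, hQ, hQ1, rfl⟩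
  have regroup (h : U → S → ℝ) :
      ∑ i ∈ range n, h (f i) (g i) = ∑ u, ∑ t, numOcc n (fun i => (f i, g i)) (u, t) * h u t := by
    rw [← Fintype.sum_prod_type', sum_numOcc_mul n (fun i => (f i, g i)) fun p => h p.1 p.2]
  rw [maxCondLogLik, regroup (fun u t => log (Q u t)),
    regroup (fun u t => log (numOcc n (fun i => (f i, g i)) (u, t) / numOcc n f u))]
  refine sum_le_sum fun u _ => ?_
  rw [numOcc_eq_sum_numOcc_prod n f g u]
  exact sum_mul_log_le_sum_mul_log_div_sum _ _ (fun t => numOcc_nonneg ..) (hQ u) (hQ1 u)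

lemma bddAbove_condLogLiks (n : ℕ) (f : ℕ → U) (g : ℕ → S) : BddAbove (condLogLiks n f g) :=
  ⟨_, le_maxCondLogLik n f g⟩

lemma maxCondLogLik_le_sSup [Nonempty S] (n : ℕ) (f : ℕ → U) (g : ℕ → S) :
    maxCondLogLik n f g ≤ sSup (condLogLiks n f g) := by
  set N := numOcc n fun i => (f i, g i)
  set M := numOcc n f
  set K : ℝ := ((Fintype.card S : ℕ) : ℝ)
  -- Some counts `N (u, t)` may vanish, so the supremum is approached by additive smoothing.
  let loglik (δ : ℝ) := ∑ i ∈ range n, log ((N (f i, g i) + δ) / (M (f i) + δ * K))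
  have hmem : ∀ δ > 0, loglik δ ∈ condLogLiks n f g := by
    intro δ hδ
    have hden (u : U) : 0 < M u + δ * K := by
      have : 0 ≤ M u := numOcc_nonneg ..
      positivity
    refine ⟨fun u t => (N (u, t) + δ) / (M u + δ * K), fun u t => ?_, fun u => ?_, rfl⟩
    · have : 0 ≤ N (u, t) := numOcc_nonneg ..
      have := hden u
      positivity
    · rw [← sum_div, div_eq_one_iff_eq (hden u).ne', sum_add_distrib,
        ← numOcc_eq_sum_numOcc_prod n f g u, sum_const, card_univ, nsmul_eq_mul, mul_comm]
  have hlim : Tendsto loglik (𝓝[>] 0) (𝓝 (maxCondLogLik n f g)) := by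
    refine tendsto_nhdsWithin_of_tendsto_nhds (tendsto_finsetSum _ fun i hi => ?_)
    have hN := one_le_numOcc_self (mem_range.1 hi) fun i => (f i, g i)
    have hM := one_le_numOcc_self (mem_range.1 hi) f
    have : ContinuousAt (fun δ => log ((N (f i, g i) + δ) / (M (f i) + δ * K))) 0 := by
      fun_prop (disch := simp only [zero_mul, add_zero]; positivity)
    simpa using this.tendsto
  exact le_of_tendsto hlim (eventually_nhdsWithin_of_forall fun δ hδ =>
    le_csSup (bddAbove_condLogLiks n f g) (hmem δ hδ))

theorem sSup_condLogLiks [Nonempty S] (n : ℕ) (f : ℕ → U) (g : ℕ → S) :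
    sSup (condLogLiks n f g) = maxCondLogLik n f g :=
  le_antisymm (csSup_le (condLogLiks_nonempty n f g) (le_maxCondLogLik n f g))
    (maxCondLogLik_le_sSup n f g)

end MaximumLikelihood

lemma factorLogLiks_eq_add {U₁ S₁ U₂ S₂ : Type*} [Fintype S₁] [Fintype S₂] (n : ℕ)
    (f₁ : ℕ → U₁) (g₁ : ℕ → S₁) (f₂ : ℕ → U₂) (g₂ : ℕ → S₂) :
    {L : ℝ | ∃ (Q₁ : U₁ → S₁ → ℝ) (Q₂ : U₂ → S₂ → ℝ),
        (∀ u a, 0 < Q₁ u a) ∧ (∀ u, ∑ a, Q₁ u a = 1) ∧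
        (∀ v b, 0 < Q₂ v b) ∧ (∀ v, ∑ b, Q₂ v b = 1) ∧
        L = ∑ i ∈ range n, log (Q₁ (f₁ i) (g₁ i) * Q₂ (f₂ i) (g₂ i))}
      = condLogLiks n f₁ g₁ + condLogLiks n f₂ g₂ := by
  ext L
  simp only [Set.mem_add, condLogLiks, Set.mem_ofPred_eq]
  constructor
  · rintro ⟨Q₁, Q₂, hQ₁, hQ₁1, hQ₂, hQ₂1, rfl⟩
    refine ⟨_, ⟨Q₁, hQ₁, hQ₁1, rfl⟩, _, ⟨Q₂, hQ₂, hQ₂1, rfl⟩, ?_⟩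
    rw [← sum_add_distrib]
    exact sum_congr rfl fun i _ => (log_mul (hQ₁ _ _).ne' (hQ₂ _ _).ne').symm
  · rintro ⟨_, ⟨Q₁, hQ₁, hQ₁1, rfl⟩, _, ⟨Q₂, hQ₂, hQ₂1, rfl⟩, rfl⟩
    refine ⟨Q₁, Q₂, hQ₁, hQ₁1, hQ₂, hQ₂1, ?_⟩
    rw [← sum_add_distrib]
    exact sum_congr rfl fun i _ => (log_mul (hQ₁ _ _).ne' (hQ₂ _ _).ne').symm

theorem sSup_condLogLiks_sub_sSup_factorLogLiks {U V A B : Type*} [Fintype U] [Fintype V]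
    [Fintype A] [Fintype B] [DecidableEq U] [DecidableEq V] [DecidableEq A] [DecidableEq B]
    [Nonempty A] [Nonempty B] (n : ℕ) (c : ℕ → U) (s : ℕ → A × B) (cy : ℕ → V) :
    sSup (condLogLiks n c s)
        - sSup {L : ℝ | ∃ (Qx : U → A → ℝ) (Qy : V → B → ℝ),
            (∀ u a, 0 < Qx u a) ∧ (∀ u, ∑ a, Qx u a = 1) ∧
            (∀ v b, 0 < Qy v b) ∧ (∀ v, ∑ b, Qy v b = 1) ∧
            L = ∑ i ∈ range n, log (Qx (c i) (s i).1 * Qy (cy i) (s i).2)}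
      = ∑ i ∈ range n, log (numOcc n (fun i => (c i, s i)) (c i, s i) * numOcc n cy (cy i)
          / (numOcc n (fun i => (c i, (s i).1)) (c i, (s i).1)
            * numOcc n (fun i => (cy i, (s i).2)) (cy i, (s i).2))) := by
  rw [factorLogLiks_eq_add, csSup_add (condLogLiks_nonempty ..) (bddAbove_condLogLiks ..)
    (condLogLiks_nonempty ..) (bddAbove_condLogLiks ..), sSup_condLogLiks, sSup_condLogLiks,
    sSup_condLogLiks, maxCondLogLik, maxCondLogLik, maxCondLogLik, ← sum_add_distrib,
    ← sum_sub_distrib]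
  refine sum_congr rfl fun i hi => ?_
  have hi := mem_range.1 hi
  have h₁ := one_le_numOcc_self hi fun i => (c i, s i)
  have h₂ := one_le_numOcc_self hi cy
  have h₃ := one_le_numOcc_self hi fun i => (c i, (s i).1)
  have h₄ := one_le_numOcc_self hi fun i => (cy i, (s i).2)
  have h₅ := one_le_numOcc_self hi c
  rw [log_div (by positivity) (by positivity), log_div (by positivity) (by positivity),
    log_div (by positivity) (by positivity), log_div (by positivity) (by positivity),
    log_mul (by positivity) (by positivity), log_mul (by positivity) (by positivity)]
  ring

def window {S : Type*} (z : ℕ → S) (l i : ℕ) : Fin l → S := fun j => z (i + j)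

lemma window_succ {S : Type*} (z : ℕ → S) (l i : ℕ) :
    window z (l + 1) i = Fin.snoc (window z l i) (z (i + l)) := by
  funext j
  induction j using Fin.lastCases <;> simp [window]

lemma numOcc_window_succ {S : Type*} [DecidableEq S] (z : ℕ → S) (n l i : ℕ) :
    numOcc n (fun i => (window z l i, z (i + l))) (window z l i, z (i + l))
      = numOcc n (window z (l + 1)) (window z (l + 1) i) := by
  have := numOcc_comp_of_injective (Fin.snoc_injective2 (α := fun _ => S)).uncurry n
    (fun i => (window z l i, z (i + l))) (window z l i, z (i + l))
  simp only [uncurry_apply_pair, ← window_succ] at this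
  exact this.symm

lemma natCast_mul_empBlock {S : Type*} [DecidableEq S] (z : ℕ → S) (l n : ℕ) (w : Fin l → S) :
    (n : ℝ) * empBlock z l n w = numOcc n (window z l) w := by
  rcases n.eq_zero_or_pos with rfl | hn
  · simp [numOcc]
  rw [empBlock, mul_div_cancel₀ _ (by positivity), numOcc_eq_sum]
  simp only [window, funext_iff]

section EmpiricalMarginals

variable {A B : Type*} [DecidableEq A] [DecidableEq B]

lemma natCast_mul_yFull [Fintype A] (z : ℕ → A × B) (k n : ℕ) (b : Fin (k + 1) → B) :
    (n : ℝ) * yFull k (empBlock z (k + 1) n) b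
      = numOcc n (window (fun m => (z m).2) (k + 1)) b := by
  have hg : Injective fun (a : Fin (k + 1) → A) i => (a i, b i) :=
    fun a a' h => funext fun i => congrArg Prod.fst (congrFun h i)
  have hφ (w : Fin (k + 1) → A × B) :
      (fun j => (w j).2) = b ↔ ∃ a : Fin (k + 1) → A, (fun i => (a i, b i)) = w := by
    refine ⟨fun h => ⟨fun j => (w j).1, funext fun j => by rw [← h]⟩, ?_⟩
    rintro ⟨a, rfl⟩
    rfl
  rw [yFull, mul_sum]
  simp only [natCast_mul_empBlock]
  exact sum_numOcc_of_injective hg hφ n _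

lemma natCast_mul_yFront [Fintype A] [Fintype B] (z : ℕ → A × B) (k n : ℕ) (b : Fin k → B) :
    (n : ℝ) * yFront k (empBlock z (k + 1) n) b = numOcc n (window (fun m => (z m).2) k) b := by
  have hg := (Fin.snoc_injective2 (α := fun _ => B)).right b
  have hφ (w : Fin (k + 1) → B) : Fin.init w = b ↔ ∃ s, (Fin.snoc b s : Fin (k + 1) → B) = w :=
    ⟨fun h => ⟨w (Fin.last k), by rw [← h, Fin.snoc_init_self]⟩,
      by rintro ⟨s, rfl⟩; exact Fin.init_snoc _ _⟩
  rw [yFront, mul_sum]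
  simp only [natCast_mul_yFull]
  exact sum_numOcc_of_injective hg hφ n _

lemma natCast_mul_xyFront [Fintype B] (z : ℕ → A × B) (k n : ℕ) (a : Fin (k + 1) → A)
    (b : Fin k → B) :
    (n : ℝ) * xyFront k (empBlock z (k + 1) n) a b
      = numOcc n (fun i => (window (fun m => (z m).1) (k + 1) i, window (fun m => (z m).2) k i))
          (a, b) := by
  have hg : Injective fun (s : B) i => (a i, (Fin.snoc b s : Fin (k + 1) → B) i) :=
    fun s s' h => by simpa using congrArg Prod.snd (congrFun h (Fin.last k))
  have hφ (w : Fin (k + 1) → A × B) :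
      ((fun j => (w j).1), Fin.init fun j => (w j).2) = (a, b)
        ↔ ∃ s, (fun i => (a i, (Fin.snoc b s : Fin (k + 1) → B) i)) = w := by
    constructor
    · rintro ⟨rfl, rfl⟩
      exact ⟨(w (Fin.last k)).2, funext fun i =>
        Prod.ext rfl (congrFun (Fin.snoc_init_self fun j => (w j).2) i)⟩
    · rintro ⟨s, rfl⟩
      simp
  rw [xyFront, mul_sum]
  simp only [natCast_mul_empBlock]
  exact sum_numOcc_of_injective hg hφ n _

lemma numOcc_window_fst_succ (z : ℕ → A × B) (n k i : ℕ) :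
    numOcc n (fun i => (window z k i, (z (i + k)).1)) (window z k i, (z (i + k)).1)
      = numOcc n (fun i => (window (fun m => (z m).1) (k + 1) i, window (fun m => (z m).2) k i))
          (window (fun m => (z m).1) (k + 1) i, window (fun m => (z m).2) k i) := by
  have he : Injective fun p : (Fin k → A × B) × A =>
      ((Fin.snoc (fun j => (p.1 j).1) p.2 : Fin (k + 1) → A), fun j => (p.1 j).2) := by
    rintro ⟨c, a⟩ ⟨c', a'⟩ h
    have hsnoc : (Fin.snoc (fun j => (c j).1) a : Fin (k + 1) → A)
        = Fin.snoc (fun j => (c' j).1) a' := congrArg Prod.fst h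
    obtain ⟨hfst, rfl⟩ := Fin.snoc_injective2 hsnoc
    exact Prod.ext
      (funext fun j => Prod.ext (congrFun hfst j) (congrFun (congrArg Prod.snd h) j)) rfl
  have := numOcc_comp_of_injective he n
    (fun i => (window z k i, (z (i + k)).1)) (window z k i, (z (i + k)).1)
  simp only [window_succ]
  exact this.symm

lemma logRatio_empBlock_window [Fintype A] [Fintype B] (z : ℕ → A × B) (k : ℕ) {n i : ℕ}
    (hi : i < n) :
    logRatio k (empBlock z (k + 1) n) (window z (k + 1) i)
      = log (numOcc n (fun i => (window z k i, z (i + k))) (window z k i, z (i + k))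
            * numOcc n (window (fun m => (z m).2) k) (window (fun m => (z m).2) k i)
          / (numOcc n (fun i => (window z k i, (z (i + k)).1)) (window z k i, (z (i + k)).1)
            * numOcc n (fun i => (window (fun m => (z m).2) k i, (z (i + k)).2))
                (window (fun m => (z m).2) k i, (z (i + k)).2))) := by
  have hn : (n : ℝ) ≠ 0 := Nat.cast_ne_zero.2 (by omega)
  have hcancel (a b c d : ℝ) : n * a * (n * d) / (n * b * (n * c)) = a * d / (b * c) := by
    rw [mul_mul_mul_comm, mul_mul_mul_comm _ b, mul_div_mul_left _ _ (mul_ne_zero hn hn)]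
  rw [numOcc_window_succ, numOcc_window_fst_succ, numOcc_window_succ (fun m => (z m).2),
    ← natCast_mul_empBlock, ← natCast_mul_yFront, ← natCast_mul_xyFront, ← natCast_mul_yFull,
    hcancel]
  -- `(j.castSucc : ℕ)` and `(j : ℕ)` agree definitionally
  rfl

lemma natCast_mul_pluginDI [Fintype A] [Fintype B] (z : ℕ → A × B) (k n : ℕ) :
    n * pluginDI z k n
      = ∑ i ∈ range n, logRatio k (empBlock z (k + 1) n) (window z (k + 1) i) := by
  rw [pluginDI, condMIk, mul_sum]
  simp only [← mul_assoc, natCast_mul_empBlock]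
  exact sum_numOcc_mul n _ _

end EmpiricalMarginals

theorem stmt15_general {Ω A B : Type*}
    [Fintype A] [Fintype B] [DecidableEq A] [DecidableEq B]
    (k : ℕ)
    (Z : ℕ → Ω → A × B)
    (n : ℕ) (ω : Ω) :
    2 * (sSup {L : ℝ | ∃ Q' : (Fin k → A × B) → A × B → ℝ,
            (∀ u s, 0 < Q' u s) ∧ (∀ u, ∑ s, Q' u s = 1) ∧
            L = ∑ i ∈ Finset.range n,
              Real.log (Q' (fun j : Fin k => Z (i + (j : ℕ)) ω) (Z (i + k) ω))}
        - sSup {L : ℝ | ∃ (Qx : (Fin k → A × B) → A → ℝ) (Qy : (Fin k → B) → B → ℝ),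
            (∀ u a, 0 < Qx u a) ∧ (∀ u, ∑ a, Qx u a = 1) ∧
            (∀ v b, 0 < Qy v b) ∧ (∀ v, ∑ b, Qy v b = 1) ∧
            L = ∑ i ∈ Finset.range n,
              Real.log (Qx (fun j : Fin k => Z (i + (j : ℕ)) ω) (Z (i + k) ω).1
                * Qy (fun j : Fin k => (Z (i + (j : ℕ)) ω).2) (Z (i + k) ω).2)})
      = 2 * n * pluginDI (fun i => Z i ω) k n := by
  have : Nonempty A := ⟨(Z 0 ω).1⟩
  have : Nonempty B := ⟨(Z 0 ω).2⟩
  rw [mul_assoc, natCast_mul_pluginDI,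
    sum_congr rfl fun i hi => logRatio_empBlock_window _ k (mem_range.1 hi)]
  exact congrArg (2 * ·) (sSup_condLogLiks_sub_sSup_factorLogLiks n _ _ _)

/-- **Proposition (DILRT)** (Kontoyiannis–Skoularidou): the likelihood-ratio
statistic `Δ_n`, for testing the factorized (no causal influence) null model
within the all-positive order-`k` Markov model, is exactly `2n` times the
plug-in estimator of the directed information rate. -/
theorem stmt15 {Ω A B : Type*} [MeasurableSpace Ω]
    [MeasurableSpace A] [MeasurableSpace B]
    [Fintype A] [Fintype B] [DecidableEq A] [DecidableEq B]
    (μ : Measure Ω) [IsProbabilityMeasure μ]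
    (k : ℕ) (hk : 0 < k)
    (Z : ℕ → Ω → A × B)
    (Q : (Fin k → A × B) → A × B → ℝ)
    (hZmeas : ∀ i, Measurable (Z i))
    (hQpos : ∀ u s, 0 < Q u s) (hQrow : ∀ u, ∑ s, Q u s = 1)
    (hM : IsMarkovK μ Z k Q)
    (n : ℕ) (hn : 0 < n) (ω : Ω) :
    2 * (sSup {L : ℝ | ∃ Q' : (Fin k → A × B) → A × B → ℝ,
            (∀ u s, 0 < Q' u s) ∧ (∀ u, ∑ s, Q' u s = 1) ∧
            L = ∑ i ∈ Finset.range n,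
              Real.log (Q' (fun j : Fin k => Z (i + (j : ℕ)) ω) (Z (i + k) ω))}
        - sSup {L : ℝ | ∃ (Qx : (Fin k → A × B) → A → ℝ) (Qy : (Fin k → B) → B → ℝ),
            (∀ u a, 0 < Qx u a) ∧ (∀ u, ∑ a, Qx u a = 1) ∧
            (∀ v b, 0 < Qy v b) ∧ (∀ v, ∑ b, Qy v b = 1) ∧
            L = ∑ i ∈ Finset.range n,
              Real.log (Qx (fun j : Fin k => Z (i + (j : ℕ)) ω) (Z (i + k) ω).1
                * Qy (fun j : Fin k => (Z (i + (j : ℕ)) ω).2) (Z (i + k) ω).2)})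
      = 2 * n * pluginDI (fun i => Z i ω) k n :=
  stmt15_general k Z n ω

end
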